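/- Let a, b ≥ 2 be coprime integers, r ≥ 0, S = S(a,b,r), and for a positive integer c let S/c = {m ∈ ℤ_{>0} : c·m ∈ S}. Then |S| − |S/a| − |S/b| + |S/(a·b)| = (2r+1)(a−1)(b−1)/2. -/

import Mathlib

open Set

/-- ℓ(a,b,m): the number of pairs (i,j) of positive integers with a·i + b·j = m. -/
noncomputable def lcount (a b m : ℕ) : ℕ :=
  {q : ℕ × ℕ | 0 < q.1 ∧ 0 < q.2 ∧ a * q.1 + b * q.2 = m}.ncard

/-- The truncation set S(a,b,r). -/
def truncS (a b r : ℕ) : Set ℕ := {m | 0 < m ∧ lcount a b m ≤ r}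

/-- The quotient truncation set S/c = {m > 0 : c·m ∈ S}. -/
def truncSdiv (a b r c : ℕ) : Set ℕ := {m | 0 < m ∧ c * m ∈ truncS a b r}

lemma solFinite (a b m : ℕ) (ha : 0 < a) (hb : 0 < b) :
    {q : ℕ × ℕ | 0 < q.1 ∧ 0 < q.2 ∧ a * q.1 + b * q.2 = m}.Finite := by
  apply Set.Finite.subset ((Set.finite_Iic m).prod (Set.finite_Iic m))
  rintro ⟨i, j⟩ ⟨hi, hj, hij⟩
  dsimp only at hi hj hij
  have h1 : i ≤ a * i := Nat.le_mul_of_pos_left i ha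
  have h2 : j ≤ b * j := Nat.le_mul_of_pos_left j hb
  constructor <;> simp only [Set.mem_Iic] <;> omega

lemma lcount_lt_iff (a b r m : ℕ) (ha : 0 < a) (hb : 0 < b) (hab : Nat.Coprime a b) :
    r < lcount a b m ↔ ∃ i j, b * r < i ∧ 0 < j ∧ a * i + b * j = m := by
  set Q := {q : ℕ × ℕ | 0 < q.1 ∧ 0 < q.2 ∧ a * q.1 + b * q.2 = m} with hQ
  have hfin : Q.Finite := solFinite a b m ha hb
  have hlc : lcount a b m = Q.ncard := rfl
  constructor
  · intro hr
    rw [hlc] at hr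
    by_contra hcon
    push_neg at hcon
    have hle : ∀ q ∈ Q, q.1 ≤ b * r := by
      rintro ⟨i, j⟩ ⟨hi, hj, hij⟩
      dsimp only at hi hj hij ⊢
      by_contra hgt
      exact hcon i j (by omega) hj hij
    set f : ℕ × ℕ → ℕ := fun q => (q.1 - 1) / b with hf
    have hinj : Set.InjOn f Q := by
      have key : ∀ x y u v : ℕ, 0 < x → 0 < y → 0 < u → 0 < v →
          a * x + b * u = m → a * y + b * v = m → x ≤ y → ((x-1)/b = (y-1)/b) →
          (x, u) = (y, v) := by
        intro x y u v hx hy hu hv hxu hyv hxy hdiv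
        have hax : a * x ≤ a * y := Nat.mul_le_mul_left a hxy
        have huv : v ≤ u := Nat.le_of_mul_le_mul_left (by omega : b * v ≤ b * u) hb
        have e1 : a * (y - x) + a * x = a * y := by
          rw [← Nat.mul_add]; congr 1; omega
        have e2 : b * (u - v) + b * v = b * u := by
          rw [← Nat.mul_add]; congr 1; omega
        have hdvd : b ∣ (y - x) * a := ⟨u - v, by
          have hc : (y - x) * a = a * (y - x) := Nat.mul_comm _ _
          omega⟩
        have hbd : b ∣ (y - x) := (Nat.Coprime.dvd_of_dvd_mul_right hab.symm) hdvd
        obtain ⟨k, hk⟩ := hbd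
        have e3 : y - 1 = (x - 1) + b * k := by omega
        have e4 : ((x-1) + b * k) / b = (x-1)/b + k := Nat.add_mul_div_left _ k hb
        rw [e3, e4] at hdiv
        have hk0 : k = 0 := by simpa using hdiv
        have hxy' : x = y := by subst hk0; omega
        have huv' : u = v := by
          subst hxy'
          have : b * u = b * v := by omega
          exact Nat.eq_of_mul_eq_mul_left hb this
        rw [hxy', huv']
      rintro ⟨i, j⟩ ⟨hi, hj, hij⟩ ⟨i', j'⟩ ⟨hi', hj', hij'⟩ hfe
      simp only [hf] at hfe
      rcases le_total i i' with h | h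
      · exact key i i' j j' hi hi' hj hj' hij hij' h hfe
      · exact (key i' i j' j hi' hi hj' hj hij' hij h hfe.symm).symm
    have hsub2 : f '' Q ⊆ Set.Iio r := by
      rintro _ ⟨⟨i, j⟩, hq, rfl⟩
      have h1 := hle _ hq
      obtain ⟨hi, hj, hij⟩ := hq
      dsimp only at hi hj hij h1
      simp only [hf, Set.mem_Iio]
      rw [Nat.div_lt_iff_lt_mul hb]
      have hcomm : r * b = b * r := Nat.mul_comm r b
      omega
    have hcard := Set.ncard_le_ncard hsub2 (Set.finite_Iio r)
    rw [Set.ncard_image_of_injOn hinj] at hcard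
    have : (Set.Iio r).ncard = r := by
      rw [← Finset.coe_Iio, Set.ncard_coe_finset, Nat.card_Iio]
    omega
  · rintro ⟨i, j, hbr, hj, hij⟩
    set g : ℕ → ℕ × ℕ := fun t => (i - t * b, j + t * a) with hg
    have hsub : g '' (Set.Iio (r+1)) ⊆ Q := by
      rintro _ ⟨t, ht, rfl⟩
      simp only [Set.mem_Iio] at ht
      have htb : t * b ≤ r * b := Nat.mul_le_mul_right b (by omega)
      have hrb : r * b = b * r := Nat.mul_comm r b
      have h1 : t * b < i := by omega
      simp only [hg, hQ, Set.mem_setOf_eq]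
      refine ⟨by omega, by omega, ?_⟩
      have h2 : a * (i - t * b) + a * (t * b) = a * i := by
        rw [← Nat.mul_add]; congr 1; omega
      have h4 : b * (j + t * a) = b * j + b * (t * a) := Nat.mul_add b j (t*a)
      have h5 : a * (t * b) = b * (t * a) := by ring
      omega
    have hinj : Set.InjOn g (Set.Iio (r+1)) := by
      intro t _ t' _ he
      simp only [hg, Prod.mk.injEq] at he
      have h6 : t * a = t' * a := by omega
      exact Nat.eq_of_mul_eq_mul_right ha h6
    have h7 : (g '' (Set.Iio (r+1))).ncard = r + 1 := by
      rw [Set.ncard_image_of_injOn hinj, ← Finset.coe_Iio, Set.ncard_coe_finset, Nat.card_Iio]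
    have h8 := Set.ncard_le_ncard hsub hfin
    rw [hlc]
    omega

lemma exA (a b r m : ℕ) (ha : 0 < a) (hb : 0 < b) (hab : Nat.Coprime a b) :
    (∃ i j, b * r < i ∧ 0 < j ∧ a * i + b * j = a * m) ↔ b * (r+1) < m := by
  have e0 : b * (r + 1) = b * r + b := by ring
  constructor
  · rintro ⟨i, j, hbr, hj, hij⟩
    have him : a * i ≤ a * m := by omega
    have hi_le : i ≤ m := Nat.le_of_mul_le_mul_left him ha
    have e1 : a * (m - i) + a * i = a * m := by rw [← Nat.mul_add]; congr 1; omega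
    have hdvd : a ∣ b * j := ⟨m - i, by omega⟩
    have haj : a ∣ j := (Nat.Coprime.dvd_of_dvd_mul_left hab) hdvd
    obtain ⟨j', hj'⟩ := haj
    have hj'pos : 0 < j' := by
      rcases Nat.eq_zero_or_pos j' with h | h
      · subst h; omega
      · exact h
    have e2 : a * i + b * (a * j') = a * m := by rw [← hj']; exact hij
    have e3 : b * (a * j') = a * (b * j') := by ring
    have e4 : a * (i + b * j') = a * m := by rw [Nat.mul_add]; omega
    have e5 : i + b * j' = m := Nat.eq_of_mul_eq_mul_left ha e4
    have e6 : b * 1 ≤ b * j' := Nat.mul_le_mul_left b hj'pos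
    have e7 : b * 1 = b := by ring
    omega
  · intro hm
    refine ⟨m - b, a, by omega, ha, ?_⟩
    have e1 : a * (m - b) + a * b = a * m := by rw [← Nat.mul_add]; congr 1; omega
    have e2 : b * a = a * b := by ring
    omega

lemma exB (a b r m : ℕ) (ha : 0 < a) (hb : 0 < b) (hab : Nat.Coprime a b) :
    (∃ i j, b * r < i ∧ 0 < j ∧ a * i + b * j = b * m) ↔ a * (r+1) < m := by
  constructor
  · rintro ⟨i, j, hbr, hj, hij⟩
    have hdvd : b ∣ a * i := by
      have hjm : b * j ≤ b * m := by omega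
      have hj_le : j ≤ m := Nat.le_of_mul_le_mul_left hjm hb
      have e1 : b * (m - j) + b * j = b * m := by rw [← Nat.mul_add]; congr 1; omega
      exact ⟨m - j, by omega⟩
    have hbi : b ∣ i := (Nat.Coprime.dvd_of_dvd_mul_left hab.symm) hdvd
    obtain ⟨i', hi'⟩ := hbi
    have hii' : r < i' := by
      by_contra h
      push_neg at h
      have : b * i' ≤ b * r := Nat.mul_le_mul_left b h
      omega
    have e2 : a * (b * i') + b * j = b * m := by rw [← hi']; exact hij
    have e3 : a * (b * i') = b * (a * i') := by ring
    have e4 : b * (a * i' + j) = b * m := by rw [Nat.mul_add]; omega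
    have e5 : a * i' + j = m := Nat.eq_of_mul_eq_mul_left hb e4
    have e6 : a * (r + 1) ≤ a * i' := Nat.mul_le_mul_left a (by omega)
    omega
  · intro hm
    refine ⟨b * (r + 1), m - a * (r + 1), by
        have : b * (r+1) = b * r + b := by ring
        omega, by omega, ?_⟩
    have e1 : b * (m - a * (r+1)) + b * (a * (r+1)) = b * m := by
      rw [← Nat.mul_add]; congr 1; omega
    have e2 : a * (b * (r+1)) = b * (a * (r+1)) := by ring
    omega

lemma exAB (a b r m : ℕ) (ha : 0 < a) (hb : 0 < b) (hab : Nat.Coprime a b) :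
    (∃ i j, b * r < i ∧ 0 < j ∧ a * i + b * j = a * b * m) ↔ r + 1 < m := by
  have e : a * b * m = b * (a * m) := by ring
  rw [e, exB a b r (a * m) ha hb hab]
  constructor
  · intro h
    by_contra hc
    push_neg at hc
    have : a * m ≤ a * (r + 1) := Nat.mul_le_mul_left a hc
    omega
  · intro h
    exact Nat.mul_lt_mul_of_le_of_lt (le_refl a) h ha

lemma ge_shift (b r i0 i' : ℕ) (hb : 0 < b) (h1 : 1 ≤ i0) (h2 : i0 ≤ b)
    (h3 : b * r < i') (h4 : i' % b = i0 % b) : b * r + i0 ≤ i' := by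
  have hd : (b : ℤ) ∣ (i0 : ℤ) - (i' : ℤ) := (Nat.ModEq.dvd (h4 : Nat.ModEq b i' i0))
  obtain ⟨k, hk⟩ := hd
  have hbz : (0:ℤ) < b := by exact_mod_cast hb
  zify
  zify at h1 h2 h3
  have h5 : (b:ℤ) * r < i0 - b * k := by omega
  have h6 : (b:ℤ) * r < b * (1 - k) := by nlinarith
  have h7 : (r:ℤ) < 1 - k := lt_of_mul_lt_mul_left h6 (by positivity)
  have h8 : (k:ℤ) ≤ -r := by omega
  have h9 : (b:ℤ) * k ≤ b * (-(r:ℤ)) := by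
    apply mul_le_mul_of_nonneg_left h8 (by positivity)
  have h10 : (b:ℤ) * (-(r:ℤ)) = -(b*r) := by ring
  omega

lemma cancel_i (a b i i' : ℕ) (hb : 0 < b) (hab : Nat.Coprime a b)
    (hi1 : 1 ≤ i) (hi2 : i ≤ b) (hi1' : 1 ≤ i') (hi2' : i' ≤ b)
    (h : (a * i) % b = (a * i') % b) : i = i' := by
  have h2 : i % b = i' % b := Nat.ModEq.cancel_left_of_coprime hab.symm h
  rcases lt_or_eq_of_le hi2 with hA | hA
  · rcases lt_or_eq_of_le hi2' with hB | hB
    · rw [Nat.mod_eq_of_lt hA, Nat.mod_eq_of_lt hB] at h2; exact h2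
    · subst hB; rw [Nat.mod_eq_of_lt hA, Nat.mod_self] at h2; omega
  · rcases lt_or_eq_of_le hi2' with hB | hB
    · subst hA; rw [Nat.mod_self, Nat.mod_eq_of_lt hB] at h2; omega
    · omega

lemma exists_i0 (a b m : ℕ) (hb : 0 < b) (hab : Nat.Coprime a b) :
    ∃ i, 1 ≤ i ∧ i ≤ b ∧ (a * i) % b = m % b := by
  haveI : NeZero b := ⟨hb.ne'⟩
  set z : ZMod b := (m : ZMod b) * (a : ZMod b)⁻¹ with hz
  have hvlt : z.val < b := ZMod.val_lt z
  have hcast : ((z.val : ℕ) : ZMod b) = z := ZMod.natCast_rightInverse z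
  have hone : (a : ZMod b) * (a : ZMod b)⁻¹ = 1 := ZMod.coe_mul_inv_eq_one a hab
  have key : ((a * z.val : ℕ) : ZMod b) = (m : ZMod b) := by
    push_cast
    rw [hcast, hz, mul_comm (a : ZMod b) ((m : ZMod b) * (a : ZMod b)⁻¹), mul_assoc,
      mul_comm ((a : ZMod b)⁻¹) (a : ZMod b), hone, mul_one]
  have hmod : (a * z.val) % b = m % b := (ZMod.natCast_eq_natCast_iff _ _ _).mp key
  rcases Nat.eq_zero_or_pos z.val with h0 | hpos
  · refine ⟨b, hb, le_refl b, ?_⟩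
    rw [h0, Nat.mul_zero] at hmod
    simp only [Nat.zero_mod] at hmod
    rw [Nat.mul_mod_left a b]
    omega
  · exact ⟨z.val, hpos, hvlt.le, hmod⟩

lemma mod_pred (b x : ℕ) (hb : 0 < b) (hx : 0 < x) (hw : x % b ≠ 0) :
    (x - 1) % b = x % b - 1 ∧ (x - 1) / b = x / b := by
  have h1 := Nat.div_add_mod x b
  have h2 : x % b < b := Nat.mod_lt _ hb
  have h3 : x - 1 = (x % b - 1) + b * (x / b) := by omega
  constructor
  · rw [h3, Nat.add_mul_mod_self_left, Nat.mod_eq_of_lt (by omega)]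
  · rw [h3, Nat.add_mul_div_left _ _ hb, Nat.div_eq_of_lt (by omega)]
    omega

def sig (a b i : ℕ) : ℕ := if (a*i) % b = 0 then b else (a*i) % b
def cnt (a b r i : ℕ) : ℕ := (a*r + 1) + (a*i - 1)/b
def FS (a b r : ℕ) : Finset ℕ :=
  (Finset.Icc 1 b).biUnion (fun i => (Finset.range (cnt a b r i)).image (fun t => sig a b i + t * b))

lemma sig_mod (a b i : ℕ) (hb : 0 < b) : sig a b i % b = (a*i) % b := by
  unfold sig; split_ifs with h
  · rw [Nat.mod_self]; omega
  · exact Nat.mod_eq_of_lt (Nat.mod_lt _ hb)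

lemma sig_pos (a b i : ℕ) (hb : 0 < b) : 0 < sig a b i := by
  unfold sig; split_ifs with h
  · exact hb
  · omega

lemma sig_le (a b i : ℕ) (hb : 0 < b) : sig a b i ≤ b := by
  unfold sig; split_ifs with h
  · exact le_refl b
  · exact (Nat.mod_lt _ hb).le

lemma key_ineq (a b i : ℕ) (hb : 0 < b) (hpos : 1 ≤ a * i) :
    a * i ≤ ((a*i - 1)/b) * b + sig a b i := by
  have h1 := Nat.div_add_mod (a*i - 1) b
  have h2 : (a*i - 1) % b < b := Nat.mod_lt _ hb
  have hc : b * ((a*i-1)/b) = ((a*i-1)/b) * b := Nat.mul_comm _ _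
  unfold sig; split_ifs with h
  · omega
  · obtain ⟨hm, _⟩ := mod_pred b (a*i) hb (by omega) h
    have h3 : (a*i) % b < b := Nat.mod_lt _ hb
    omega

lemma truncS_eq (a b r : ℕ) (ha : 0 < a) (hb : 0 < b) (hab : Nat.Coprime a b) :
    truncS a b r = ↑(FS a b r) := by
  ext m
  have hiff : (lcount a b m ≤ r) ↔ ¬∃ i j, b * r < i ∧ 0 < j ∧ a * i + b * j = m := by
    rw [← lcount_lt_iff a b r m ha hb hab]
    omega
  simp only [truncS, Set.mem_setOf_eq, hiff, FS, Finset.coe_biUnion, Set.mem_iUnion,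
    Finset.mem_coe, Finset.mem_Icc, Finset.mem_image, Finset.mem_range]
  constructor
  · rintro ⟨hm, hno⟩
    obtain ⟨i0, hi1, hi2, hmod⟩ := exists_i0 a b m hb hab
    have hub : m < a*(b*r + i0) + b := by
      by_contra hge
      push_neg at hge
      have hmodeq2 : (a*(b*r+i0)) % b = m % b := by
        have e : a*(b*r+i0) = a*i0 + (a*r)*b := by ring
        rw [e, Nat.add_mul_mod_self_right, hmod]
      have hle2 : a*(b*r+i0) ≤ m := by omega
      have hdvd : b ∣ m - a*(b*r+i0) := (Nat.modEq_iff_dvd' hle2).mp hmodeq2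
      obtain ⟨j, hj⟩ := hdvd
      have hjpos : 0 < j := by
        rcases Nat.eq_zero_or_pos j with h0 | h
        · rw [h0, Nat.mul_zero] at hj; omega
        · exact h
      exact hno ⟨b*r + i0, j, by omega, hjpos, by omega⟩
    refine ⟨i0, ⟨hi1, hi2⟩, ?_⟩
    have hai1 : 1 ≤ a * i0 := by
      have := Nat.mul_pos ha (show 0 < i0 by omega); omega
    have hexp : a*(b*r+i0) = (a*r)*b + a*i0 := by ring
    have hki := key_ineq a b i0 hb hai1
    have hmain : ∃ t, sig a b i0 + t * b = m := by
      rcases Nat.eq_zero_or_pos ((a*i0) % b) with hw0 | hwpos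
      · have hsig : sig a b i0 = b := by unfold sig; rw [if_pos hw0]
        have hd := Nat.div_add_mod m b
        have hqpos : 1 ≤ m / b := by
          by_contra h0
          push_neg at h0
          have h00 : m / b = 0 := Nat.lt_one_iff.mp h0
          rw [h00, Nat.mul_zero] at hd; omega
        refine ⟨m/b - 1, ?_⟩
        have e1 : (m/b - 1)*b + 1*b = (m/b)*b := by rw [← Nat.add_mul]; congr 1; omega
        have e2 : (m/b)*b = b*(m/b) := Nat.mul_comm _ _
        have e3 : 1*b = b := by ring
        omega
      · have hsig : sig a b i0 = (a*i0) % b := by unfold sig; rw [if_neg (by omega)]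
        have hd := Nat.div_add_mod m b
        have hcm : (m/b)*b = b*(m/b) := Nat.mul_comm _ _
        exact ⟨m/b, by omega⟩
    obtain ⟨t, ht⟩ := hmain
    refine ⟨t, ?_, ht⟩
    by_contra hc
    push_neg at hc
    have h1 : cnt a b r i0 * b ≤ t * b := Nat.mul_le_mul_right b hc
    have h2 : cnt a b r i0 * b = (a*r)*b + b + ((a*i0-1)/b)*b := by unfold cnt; ring
    omega
  · rintro ⟨i, ⟨hi1, hi2⟩, t, ht, rfl⟩
    refine ⟨by have := sig_pos a b i hb; omega, ?_⟩
    rintro ⟨i', j, hbr', hjpos, heq⟩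
    have hm1 : (sig a b i + t*b) % b = (a*i) % b := by
      rw [Nat.add_mul_mod_self_right, sig_mod a b i hb]
    have hm2 : (sig a b i + t*b) % b = (a*i') % b := by
      rw [← heq, Nat.add_mul_mod_self_left]
    have hcanc : i' % b = i % b :=
      Nat.ModEq.cancel_left_of_coprime hab.symm (hm2.symm.trans hm1 : (a*i')%b = (a*i)%b)
    have hge : b*r + i ≤ i' := ge_shift b r i i' hb hi1 hi2 hbr' hcanc
    have hup : a*(b*r+i) ≤ a*i' := Nat.mul_le_mul_left a hge
    have hexp : a*(b*r+i) = (a*r)*b + a*i := by ring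
    have ht2 : t ≤ a*r + (a*i-1)/b := by unfold cnt at ht; omega
    have ht' : t * b ≤ ((a*r) + (a*i-1)/b) * b := Nat.mul_le_mul_right b ht2
    have hexp2 : ((a*r) + (a*i-1)/b) * b = (a*r)*b + ((a*i-1)/b)*b := by ring
    have hdivle : ((a*i-1)/b)*b ≤ a*i - 1 := Nat.div_mul_le_self _ _
    have hsigle : sig a b i ≤ b := sig_le a b i hb
    have hai1 : 1 ≤ a*i := by have := Nat.mul_pos ha (show 0 < i by omega); omega
    have hbj : b * 1 ≤ b * j := Nat.mul_le_mul_left b hjpos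
    have hb1 : b * 1 = b := by ring
    omega

lemma FS_card (a b r : ℕ) (ha : 0 < a) (hb : 0 < b) (hab : Nat.Coprime a b) :
    (FS a b r).card = ∑ i ∈ Finset.Icc 1 b, cnt a b r i := by
  unfold FS
  rw [Finset.card_biUnion]
  · refine Finset.sum_congr rfl (fun i hi => ?_)
    rw [Finset.card_image_of_injective _ (fun t t' h => ?_), Finset.card_range]
    have : t * b = t' * b := by omega
    exact Nat.eq_of_mul_eq_mul_right hb this
  · intro i hi i' hi' hne
    simp only [Finset.mem_coe, Finset.mem_Icc] at hi hi'
    rw [Function.onFun, Finset.disjoint_left]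
    rintro x hx hx'
    simp only [Finset.mem_image, Finset.mem_range] at hx hx'
    obtain ⟨t, _, rfl⟩ := hx
    obtain ⟨t', _, he⟩ := hx'
    have h1 : (sig a b i' + t'*b) % b = (a*i') % b := by
      rw [Nat.add_mul_mod_self_right, sig_mod a b i' hb]
    have h2 : (sig a b i + t*b) % b = (a*i) % b := by
      rw [Nat.add_mul_mod_self_right, sig_mod a b i hb]
    rw [← he] at h2
    exact hne (cancel_i a b i i' hb hab hi.1 hi.2 hi'.1 hi'.2 (by omega))

lemma sum_q1 (a b : ℕ) (ha : 0 < a) (hb : 0 < b) (hab : Nat.Coprime a b) :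
    2 * ∑ i ∈ Finset.Icc 1 b, (a*i - 1)/b = (a - 1) * (b + 1) := by
  set f : ℕ → ℕ := fun i => (a*i - 1) % b with hf
  have hinj : ∀ x ∈ Finset.Icc 1 b, ∀ y ∈ Finset.Icc 1 b, f x = f y → x = y := by
    intro x hx y hy hfe
    simp only [Finset.mem_Icc] at hx hy
    have hax : 1 ≤ a * x := by have := Nat.mul_pos ha (show 0 < x by omega); omega
    have hay : 1 ≤ a * y := by have := Nat.mul_pos ha (show 0 < y by omega); omega
    have hme : (a*x - 1) % b = (a*y - 1) % b := hfe
    have h2 : (a*x - 1 + 1) % b = (a*y - 1 + 1) % b :=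
      Nat.ModEq.add_right 1 (hme : Nat.ModEq b (a*x-1) (a*y-1))
    rw [Nat.sub_add_cancel hax, Nat.sub_add_cancel hay] at h2
    exact cancel_i a b x y hb hab hx.1 hx.2 hy.1 hy.2 h2
  have hsubset : (Finset.Icc 1 b).image f ⊆ Finset.range b := by
    intro x hx
    simp only [Finset.mem_image] at hx
    obtain ⟨i, _, rfl⟩ := hx
    exact Finset.mem_range.mpr (Nat.mod_lt _ hb)
  have hcardIcc : (Finset.Icc 1 b).card = b := by rw [Nat.card_Icc]; omega
  have himage : (Finset.Icc 1 b).image f = Finset.range b := by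
    apply Finset.eq_of_subset_of_card_le hsubset
    rw [Finset.card_image_of_injOn hinj, hcardIcc, Finset.card_range]
  have hrho : ∑ i ∈ Finset.Icc 1 b, f i = ∑ x ∈ Finset.range b, x := by
    rw [← himage, Finset.sum_image hinj]
  have hgauss : (∑ x ∈ Finset.range b, x) * 2 = b * (b - 1) := Finset.sum_range_id_mul_two b
  -- sum over Icc of i
  have hIcc : 2 * ∑ i ∈ Finset.Icc 1 b, i = b * (b + 1) := by
    have h1 : Finset.Icc 1 b = Finset.Ico 1 (b+1) := by rw [Finset.Ico_add_one_right_eq_Icc]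
    rw [h1, Finset.sum_Ico_eq_sum_range]
    simp only [Nat.add_sub_cancel]
    rw [Finset.sum_add_distrib, Finset.sum_const, Finset.card_range, smul_eq_mul, mul_one]
    have hg2 : (∑ x ∈ Finset.range b, x) * 2 = b * (b - 1) := Finset.sum_range_id_mul_two b
    have : b * (b+1) = 2 * b + b * (b - 1) := by
      have e : b * (b + 1) = b * ((b-1) + 2) := by congr 1; omega
      rw [e, Nat.mul_add]
      omega
    omega
  -- per-term identity summed
  have hterm : ∀ i ∈ Finset.Icc 1 b, b * ((a*i-1)/b) + (f i + 1) = a * i := by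
    intro i hi
    simp only [Finset.mem_Icc] at hi
    have hai : 1 ≤ a * i := by have := Nat.mul_pos ha (show 0 < i by omega); omega
    have hd := Nat.div_add_mod (a*i-1) b
    simp only [hf]
    omega
  have hsum_eq : ∑ i ∈ Finset.Icc 1 b, (b * ((a*i-1)/b) + (f i + 1))
      = ∑ i ∈ Finset.Icc 1 b, a * i := Finset.sum_congr rfl hterm
  rw [Finset.sum_add_distrib, Finset.sum_add_distrib, ← Finset.mul_sum, Finset.sum_const,
    hcardIcc, smul_eq_mul, mul_one, ← Finset.mul_sum] at hsum_eq
  -- now: b * T + (R + b) = a * X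
  set T := ∑ i ∈ Finset.Icc 1 b, (a*i - 1)/b with hT
  set R := ∑ i ∈ Finset.Icc 1 b, f i with hR
  set X := ∑ i ∈ Finset.Icc 1 b, i with hX
  have hR2 : 2 * R = b * (b - 1) := by
    rw [hrho]; omega
  -- goal : 2 * T = (a-1) * (b+1)
  apply Nat.eq_of_mul_eq_mul_left hb
  have e1 : 2 * (b * T) + 2 * R + 2 * b = 2 * (a * X) := by omega
  have e2 : 2 * (a * X) = a * (2 * X) := by ring
  have e3 : a * (2 * X) = a * (b * (b+1)) := by rw [hIcc]
  have e4 : a * (b * (b+1)) = b * ((a-1) * (b+1)) + b * (b+1) := by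
    obtain ⟨a', rfl⟩ : ∃ a', a = a' + 1 := ⟨a - 1, by omega⟩
    simp only [Nat.add_sub_cancel]
    ring
  have e5 : b * (b+1) = b * (b-1) + 2 * b := by
    have e : b * (b + 1) = b * ((b-1) + 2) := by congr 1; omega
    rw [e, Nat.mul_add]
    omega
  have e6 : 2 * (b * T) = b * (2 * T) := by ring
  omega

lemma truncSdiv_eq_a (a b r : ℕ) (ha : 0 < a) (hb : 0 < b) (hab : Nat.Coprime a b) :
    truncSdiv a b r a = ↑(Finset.Icc 1 (b*(r+1))) := by
  ext m
  simp only [truncSdiv, truncS, Set.mem_setOf_eq, Finset.coe_Icc, Set.mem_Icc]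
  constructor
  · rintro ⟨hm, _, hlc⟩
    refine ⟨hm, ?_⟩
    by_contra hc; push_neg at hc
    have := (lcount_lt_iff a b r (a*m) ha hb hab).mpr ((exA a b r m ha hb hab).mpr hc)
    omega
  · rintro ⟨hm, hle⟩
    refine ⟨hm, Nat.mul_pos ha hm, ?_⟩
    by_contra hc; push_neg at hc
    have := (exA a b r m ha hb hab).mp ((lcount_lt_iff a b r (a*m) ha hb hab).mp hc)
    omega

lemma truncSdiv_eq_b (a b r : ℕ) (ha : 0 < a) (hb : 0 < b) (hab : Nat.Coprime a b) :
    truncSdiv a b r b = ↑(Finset.Icc 1 (a*(r+1))) := by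
  ext m
  simp only [truncSdiv, truncS, Set.mem_setOf_eq, Finset.coe_Icc, Set.mem_Icc]
  constructor
  · rintro ⟨hm, _, hlc⟩
    refine ⟨hm, ?_⟩
    by_contra hc; push_neg at hc
    have := (lcount_lt_iff a b r (b*m) ha hb hab).mpr ((exB a b r m ha hb hab).mpr hc)
    omega
  · rintro ⟨hm, hle⟩
    refine ⟨hm, Nat.mul_pos hb hm, ?_⟩
    by_contra hc; push_neg at hc
    have := (exB a b r m ha hb hab).mp ((lcount_lt_iff a b r (b*m) ha hb hab).mp hc)
    omega

lemma truncSdiv_eq_ab (a b r : ℕ) (ha : 0 < a) (hb : 0 < b) (hab : Nat.Coprime a b) :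
    truncSdiv a b r (a*b) = ↑(Finset.Icc 1 (r+1)) := by
  ext m
  simp only [truncSdiv, truncS, Set.mem_setOf_eq, Finset.coe_Icc, Set.mem_Icc]
  constructor
  · rintro ⟨hm, _, hlc⟩
    refine ⟨hm, ?_⟩
    by_contra hc; push_neg at hc
    have heq : a*b*m = a*b*m := rfl
    have := (lcount_lt_iff a b r (a*b*m) ha hb hab).mpr ((exAB a b r m ha hb hab).mpr hc)
    omega
  · rintro ⟨hm, hle⟩
    refine ⟨hm, Nat.mul_pos (Nat.mul_pos ha hb) hm, ?_⟩
    by_contra hc; push_neg at hc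
    have := (exAB a b r m ha hb hab).mp ((lcount_lt_iff a b r (a*b*m) ha hb hab).mp hc)
    omega

theorem stmt_8 (a b r : ℕ) (ha : 2 ≤ a) (hb : 2 ≤ b) (hab : Nat.Coprime a b) :
    ((truncS a b r).ncard : ℤ) - (truncSdiv a b r a).ncard - (truncSdiv a b r b).ncard
        + (truncSdiv a b r (a * b)).ncard
      = (2 * (r : ℤ) + 1) * ((a : ℤ) - 1) * ((b : ℤ) - 1) / 2 := by
  have ha0 : 0 < a := by omega
  have hb0 : 0 < b := by omega
  have hS : (truncS a b r).ncard = ∑ i ∈ Finset.Icc 1 b, cnt a b r i := by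
    rw [truncS_eq a b r ha0 hb0 hab, Set.ncard_coe_finset, FS_card a b r ha0 hb0 hab]
  have hsplit : ∑ i ∈ Finset.Icc 1 b, cnt a b r i
      = b * (a*r+1) + ∑ i ∈ Finset.Icc 1 b, (a*i - 1)/b := by
    unfold cnt
    rw [Finset.sum_add_distrib, Finset.sum_const, Nat.card_Icc, smul_eq_mul]
    have e : (b + 1 - 1) = b := by omega
    rw [e]
  set T := ∑ i ∈ Finset.Icc 1 b, (a*i - 1)/b with hT
  have hq := sum_q1 a b ha0 hb0 hab
  have hA : (truncSdiv a b r a).ncard = b*(r+1) := by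
    rw [truncSdiv_eq_a a b r ha0 hb0 hab, Set.ncard_coe_finset, Nat.card_Icc]
    omega
  have hB : (truncSdiv a b r b).ncard = a*(r+1) := by
    rw [truncSdiv_eq_b a b r ha0 hb0 hab, Set.ncard_coe_finset, Nat.card_Icc]
    omega
  have hAB : (truncSdiv a b r (a*b)).ncard = r+1 := by
    rw [truncSdiv_eq_ab a b r ha0 hb0 hab, Set.ncard_coe_finset, Nat.card_Icc]
    omega
  have hpar : ¬(a % 2 = 0 ∧ b % 2 = 0) := by
    rintro ⟨h1, h2⟩
    have : 2 ∣ Nat.gcd a b := Nat.dvd_gcd (by omega) (by omega)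
    rw [hab] at this
    omega
  obtain ⟨E, hE⟩ : ∃ E : ℤ, ((a:ℤ)-1)*((b:ℤ)-1) = 2*E := by
    rcases Nat.eq_zero_or_pos (a % 2) with hA2 | hA2
    · obtain ⟨k, hk⟩ : ∃ k, b = 2*k+1 := ⟨b/2, by omega⟩
      refine ⟨((a:ℤ)-1)*k, ?_⟩
      subst hk; push_cast; ring
    · obtain ⟨k, hk⟩ : ∃ k, a = 2*k+1 := ⟨a/2, by omega⟩
      refine ⟨k*((b:ℤ)-1), ?_⟩
      subst hk; push_cast; ring
  have hrhs : (2*(r:ℤ)+1) * ((a:ℤ)-1) * ((b:ℤ)-1) = 2 * ((2*(r:ℤ)+1) * E) := by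
    rw [mul_assoc, hE]; ring
  rw [hS, hsplit, hA, hB, hAB, hrhs, Int.mul_ediv_cancel_left _ (two_ne_zero)]
  have hqz : 2*(T:ℤ) = ((a:ℤ)-1)*((b:ℤ)+1) := by
    rw [← hT] at hq
    obtain ⟨a', rfl⟩ : ∃ a', a = a'+1 := ⟨a-1, by omega⟩
    rw [Nat.add_sub_cancel] at hq
    have h2 : ((2*T : ℕ) : ℤ) = ((a' * (b+1) : ℕ) : ℤ) := by exact_mod_cast congrArg (Nat.cast : ℕ → ℤ) hq
    push_cast at h2
    push_cast
    linear_combination h2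
  push_cast
  apply mul_left_cancel₀ (two_ne_zero : (2:ℤ) ≠ 0)
  linear_combination hqz + (2*(r:ℤ)+1) * hE
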